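/- For every a ∈ ℝ² in the interior of the first quadrant (a₁ > 0 and a₂ > 0) and every integer k ≥ 2, the set E³_k(Σ₁, a) has at most 2 elements, where Σ₁ = {A₁, A₂}. -/

import Mathlib

open Matrix Set

noncomputable section

/-- `XSeq S a k` is the set of all vectors `T_{k-1} ⋯ T_0 · a` with each `T_j ∈ S`
(and `XSeq S a 0 = {a}`). -/
def XSeq {n : ℕ} (S : Set (Matrix (Fin n) (Fin n) ℝ)) (a : Fin n → ℝ) : ℕ → Set (Fin n → ℝ)
  | 0 => {a}
  | k + 1 => ⋃ A ∈ S, A.mulVec '' XSeq S a k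

/-- `PHull S a k` is the convex hull of `XSeq S a k`. -/
def PHull {n : ℕ} (S : Set (Matrix (Fin n) (Fin n) ℝ)) (a : Fin n → ℝ) (k : ℕ) :
    Set (Fin n → ℝ) :=
  convexHull ℝ (XSeq S a k)

/-- `EPts S a k` is the set of extreme points of `PHull S a k`. -/
def EPts {n : ℕ} (S : Set (Matrix (Fin n) (Fin n) ℝ)) (a : Fin n → ℝ) (k : ℕ) :
    Set (Fin n → ℝ) :=
  Set.extremePoints ℝ (PHull S a k)

/-- `NExt S a k` is the number of extreme points of `PHull S a k`. -/
def NExt {n : ℕ} (S : Set (Matrix (Fin n) (Fin n) ℝ)) (a : Fin n → ℝ) (k : ℕ) : ℕ :=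
  (EPts S a k).ncard

def M1 : Matrix (Fin 2) (Fin 2) ℝ := !![0, 1; 1, 0]
def M2 : Matrix (Fin 2) (Fin 2) ℝ := !![1, 1; 0, 1]
def M3 : Matrix (Fin 2) (Fin 2) ℝ := !![1, 0; 1, 1]
def M4 : Matrix (Fin 2) (Fin 2) ℝ := !![1, 1; 1, 0]
def M5 : Matrix (Fin 2) (Fin 2) ℝ := !![0, 1; 1, 1]

/-- Interior of the first quadrant. -/
def intQ1 : Set (Fin 2 → ℝ) := {c | 0 < c 0 ∧ 0 < c 1}
/-- Interior of the second quadrant. -/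
def intQ2 : Set (Fin 2 → ℝ) := {c | c 0 < 0 ∧ 0 < c 1}
/-- Interior of the third quadrant. -/
def intQ3 : Set (Fin 2 → ℝ) := {c | c 0 < 0 ∧ c 1 < 0}
/-- Interior of the fourth quadrant. -/
def intQ4 : Set (Fin 2 → ℝ) := {c | 0 < c 0 ∧ c 1 < 0}

/-- `EQuad S a k Q` is the set of extreme points of `PHull S a k` that maximize the linear
functional `x ↦ c ⬝ᵥ x` over `PHull S a k` for some `c ∈ Q`. -/
def EQuad (S : Set (Matrix (Fin 2) (Fin 2) ℝ)) (a : Fin 2 → ℝ) (k : ℕ)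
    (Q : Set (Fin 2 → ℝ)) : Set (Fin 2 → ℝ) :=
  {p ∈ EPts S a k | ∃ c ∈ Q, ∀ x ∈ PHull S a k, c ⬝ᵥ x ≤ c ⬝ᵥ p}


/-! For `k ≥ 2`, `X_k` contains two points `(m, s)` and `(t, m)`, with `m ≤ s`, `m ≤ t` and
`|s - t| ≤ m`, such that every point of `X_k` dominates one of them componentwise. This passes
from `X_k` to `X_{k+1}` with `s` and `t` exchanged: `A₁` swaps the two points, and `A₂` maps
everything above either of them above `(s, m)`. A functional with negative coefficients cannot be
maximized at a point strictly dominating another point of `X_k`, and extreme points of `P_k` lie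
in `X_k`, so `E³_k ⊆ {(m, s), (t, m)}`. -/

lemma eq_of_le_of_dotProduct_le {n : Type*} [Fintype n] {c u p : n → ℝ} (hc : ∀ i, c i < 0)
    (hup : u ≤ p) (h : c ⬝ᵥ u ≤ c ⬝ᵥ p) : p = u := by
  have hterm : ∀ i ∈ Finset.univ, c i * (p i - u i) ≤ 0 := fun i _ =>
    mul_nonpos_of_nonpos_of_nonneg (hc i).le (sub_nonneg.2 (hup i))
  have hsum : ∑ i, c i * (p i - u i) = 0 := by
    refine le_antisymm (Finset.sum_nonpos hterm) ?_
    simpa [dotProduct, mul_sub, Finset.sum_sub_distrib] using h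
  funext i
  have := (Finset.sum_eq_zero_iff_of_nonpos hterm).1 hsum i (Finset.mem_univ i)
  linarith [(mul_eq_zero.1 this).resolve_left (hc i).ne]

lemma vec2_le_iff {α : Type*} [Preorder α] {a b : α} {x : Fin 2 → α} :
    ![a, b] ≤ x ↔ a ≤ x 0 ∧ b ≤ x 1 := by
  simp [Pi.le_def, Fin.forall_fin_two]

lemma M1_mulVec (x : Fin 2 → ℝ) : M1 *ᵥ x = ![x 1, x 0] := by
  ext i; fin_cases i <;> simp [M1, mulVec, dotProduct]

lemma M2_mulVec (x : Fin 2 → ℝ) : M2 *ᵥ x = ![x 0 + x 1, x 1] := by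
  ext i; fin_cases i <;> simp [M2, mulVec, dotProduct]

lemma XSeq_pair_succ {n : ℕ} (A B : Matrix (Fin n) (Fin n) ℝ) (a : Fin n → ℝ) (k : ℕ) :
    XSeq {A, B} a (k + 1) = (A *ᵥ ·) '' XSeq {A, B} a k ∪ (B *ᵥ ·) '' XSeq {A, B} a k :=
  biUnion_pair A B _

lemma XSeq_zero {n : ℕ} (S : Set (Matrix (Fin n) (Fin n) ℝ)) (a : Fin n → ℝ) :
    XSeq S a 0 = {a} := rfl

lemma XSeq_M1_M2_two (a : Fin 2 → ℝ) : XSeq {M1, M2} a 2 =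
    {![a 1, a 0 + a 1], ![a 0, a 1], ![a 0 + a 1 + a 1, a 1], ![a 1 + a 0, a 0]} := by
  simp only [XSeq_pair_succ, XSeq_zero, image_singleton, image_insert_eq, M1_mulVec, M2_mulVec,
    cons_val_zero, cons_val_one, cons_val_fin_one, union_singleton, insert_union, singleton_union]

structure IsCornerPair (X : Set (Fin 2 → ℝ)) (m s t : ℝ) : Prop where
  le_left : m ≤ s
  le_right : m ≤ t
  left_le : s ≤ t + m
  right_le : t ≤ s + m
  mem_left : ![m, s] ∈ X
  mem_right : ![t, m] ∈ X
  subset : X ⊆ Ici ![m, s] ∪ Ici ![t, m]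

lemma IsCornerPair.image_M1_union_M2 {X : Set (Fin 2 → ℝ)} {m s t : ℝ}
    (h : IsCornerPair X m s t) : IsCornerPair ((M1 *ᵥ ·) '' X ∪ (M2 *ᵥ ·) '' X) m t s where
  le_left := h.le_right
  le_right := h.le_left
  left_le := h.right_le
  right_le := h.left_le
  mem_left := Or.inl ⟨_, h.mem_right, (M1_mulVec _).trans (by simp)⟩
  mem_right := Or.inl ⟨_, h.mem_left, (M1_mulVec _).trans (by simp)⟩
  subset := by
    rintro _ (⟨y, hy, rfl⟩ | ⟨y, hy, rfl⟩) <;> rcases h.subset hy with hy | hy <;>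
      simp only [mem_union, mem_Ici, vec2_le_iff, M1_mulVec, M2_mulVec, cons_val_zero,
        cons_val_one, cons_val_fin_one] at hy ⊢
    · exact Or.inr ⟨hy.2, hy.1⟩
    · exact Or.inl ⟨hy.2, hy.1⟩
    · exact Or.inr ⟨by linarith [h.left_le, h.right_le], by linarith [h.le_left]⟩
    · exact Or.inr ⟨by linarith [h.left_le], hy.2⟩

lemma isCornerPair_XSeq_two {a : Fin 2 → ℝ} (h0 : 0 ≤ a 0) (h1 : 0 ≤ a 1) :
    ∃ m s t, IsCornerPair (XSeq {M1, M2} a 2) m s t := by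
  rw [XSeq_M1_M2_two]
  rcases le_or_gt (a 0) (a 1) with h | h
  · refine ⟨a 0, a 1, a 1 + a 0, by linarith, by linarith, by linarith, by linarith,
      by simp, by simp, ?_⟩
    simp only [insert_subset_iff, singleton_subset_iff, mem_union, mem_Ici, vec2_le_iff,
      cons_val_zero, cons_val_one, cons_val_fin_one]
    refine ⟨Or.inl ⟨?_, ?_⟩, Or.inl ⟨?_, ?_⟩, Or.inl ⟨?_, ?_⟩, Or.inr ⟨?_, ?_⟩⟩ <;> linarith
  · refine ⟨a 1, a 0 + a 1, a 0, by linarith, by linarith, by linarith, by linarith,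
      by simp, by simp, ?_⟩
    simp only [insert_subset_iff, singleton_subset_iff, mem_union, mem_Ici, vec2_le_iff,
      cons_val_zero, cons_val_one, cons_val_fin_one]
    refine ⟨Or.inl ⟨?_, ?_⟩, Or.inr ⟨?_, ?_⟩, Or.inr ⟨?_, ?_⟩, Or.inr ⟨?_, ?_⟩⟩ <;> linarith

lemma exists_isCornerPair_XSeq {a : Fin 2 → ℝ} (h0 : 0 ≤ a 0) (h1 : 0 ≤ a 1) {k : ℕ}
    (hk : 2 ≤ k) : ∃ m s t, IsCornerPair (XSeq {M1, M2} a k) m s t := by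
  induction k, hk using Nat.le_induction with
  | base => exact isCornerPair_XSeq_two h0 h1
  | succ k _ ih =>
    obtain ⟨m, s, t, h⟩ := ih
    exact ⟨m, t, s, XSeq_pair_succ M1 M2 a k ▸ h.image_M1_union_M2⟩

/-- For `a` in the interior of the first quadrant and `k ≥ 2`,
`|E³_k(Σ₁, a)| ≤ 2`. -/
theorem stmt11 (a : Fin 2 → ℝ) (ha : 0 < a 0 ∧ 0 < a 1) (k : ℕ) (hk : 2 ≤ k) :
    (EQuad {M1, M2} a k intQ3).ncard ≤ 2 := by
  obtain ⟨m, s, t, h⟩ := exists_isCornerPair_XSeq ha.1.le ha.2.le hk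
  have hsub : EQuad {M1, M2} a k intQ3 ⊆ {![m, s], ![t, m]} := by
    rintro p ⟨hp, c, hc, hmax⟩
    have hpX : p ∈ XSeq {M1, M2} a k := extremePoints_convexHull_subset hp
    have hneg : ∀ i, c i < 0 := Fin.forall_fin_two.2 hc
    have hle {u} (hu : u ∈ XSeq {M1, M2} a k) : c ⬝ᵥ u ≤ c ⬝ᵥ p :=
      hmax u (subset_convexHull ℝ _ hu)
    rcases h.subset hpX with hp | hp
    · exact Or.inl (eq_of_le_of_dotProduct_le hneg hp (hle h.mem_left))
    · exact Or.inr (eq_of_le_of_dotProduct_le hneg hp (hle h.mem_right))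
  calc (EQuad {M1, M2} a k intQ3).ncard ≤ ({![m, s], ![t, m]} : Set (Fin 2 → ℝ)).ncard :=
        ncard_le_ncard hsub (toFinite _)
    _ ≤ 2 := (ncard_insert_le _ _).trans (by simp)

end
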